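/- arXiv:2207.02746 — 7 statements merged into one kernel-verified Lean document; each statement's English description precedes it below -/
import Mathlib

section
/- Let K and V be types, let m be a natural number, and let k : Fin m → K assign keys to write positions. If a schedule π (a permutation of Fin m) preserves per-key order — for all positions i, j with k i = k j and i < j, one has π i < π j — then π is valid: for every value assignment v : Fin m → V, executing the writes in schedule order produces the same final state (as a function K → Option V) as executing them in serial log order. -/
/-- The state (`K → Option V`) produced by executing the `m` writes of the log
`k : Fin m → K` with values `v : Fin m → V` according to the schedule `π`
(a permutation of `Fin m`): starting from the everywhere-`none` map, for each
step `s = 0, 1, …, m−1` in increasing order, update the map at key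
`k (π⁻¹ s)` to `some (v (π⁻¹ s))`. -/
def execState {K V : Type*} [DecidableEq K] {m : ℕ} (k : Fin m → K) (v : Fin m → V)
    (π : Equiv.Perm (Fin m)) : K → Option V :=
  (List.finRange m).foldl
    (fun st s => Function.update st (k (π.symm s)) (some (v (π.symm s))))
    (fun _ => none)

/-!
Writes to distinct keys commute, so the final value at a key `q` depends only on the
subsequence of writes to `q`, taken in execution order. Listing write positions by
execution step, this subsequence is sorted by step; per-key order preservation makes it
sorted by position as well, so it coincides with the serial one.
-/

theorem List.foldl_update_apply_eq_foldl_filter {α K W : Type*} [DecidableEq K]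
    (key : α → K) (val : α → W) (st₀ : K → W) (q : K) (l : List α) :
    l.foldl (fun st a => Function.update st (key a) (val a)) st₀ q =
      (l.filter (key · = q)).foldl (fun st a => Function.update st (key a) (val a)) st₀ q := by
  induction l using List.reverseRecOn with
  | nil => rfl
  | append_singleton l a ih =>
    by_cases ha : key a = q
    · simp [List.filter_append, ha]
    · simp [List.filter_append, ha, Ne.symm ha, ih]

theorem execState_eq_foldl_map_symm {K V : Type*} [DecidableEq K] {m : ℕ} (k : Fin m → K)
    (v : Fin m → V) (π : Equiv.Perm (Fin m)) :
    execState k v π = ((List.finRange m).map π.symm).foldl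
      (fun st i => Function.update st (k i) (some (v i))) (fun _ => none) := by
  rw [execState, List.foldl_map]

theorem execState_one {K V : Type*} [DecidableEq K] {m : ℕ} (k : Fin m → K) (v : Fin m → V) :
    execState k v 1 = (List.finRange m).foldl
      (fun st i => Function.update st (k i) (some (v i))) (fun _ => none) :=
  rfl

section PerKeyOrder

variable {K : Type*} {m : ℕ} {k : Fin m → K} {π : Equiv.Perm (Fin m)}

theorem apply_lt_apply_iff_of_key_eq (horder : ∀ i j : Fin m, k i = k j → i < j → π i < π j)
    {i j : Fin m} (hij : k i = k j) : π i < π j ↔ i < j := by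
  refine ⟨fun hπ => lt_of_not_ge fun hji => ?_, horder i j hij⟩
  rcases hji.eq_or_lt with rfl | hji
  · exact lt_irrefl _ hπ
  · exact lt_asymm hπ (horder j i hij.symm hji)

theorem filter_key_map_symm_finRange_eq [DecidableEq K]
    (horder : ∀ i j : Fin m, k i = k j → i < j → π i < π j) (q : K) :
    ((List.finRange m).map π.symm).filter (k · = q) = (List.finRange m).filter (k · = q) := by
  have hsteps : ((List.finRange m).map π.symm).Pairwise (fun i j => π i < π j) :=
    List.pairwise_map.mpr (by simpa using List.pairwise_lt_finRange m)
  have hsorted : (((List.finRange m).map π.symm).filter (k · = q)).Pairwise (· < ·) := by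
    refine (hsteps.filter _).imp_of_mem fun hi hj hπ => ?_
    simp only [List.mem_filter, decide_eq_true_eq] at hi hj
    exact (apply_lt_apply_iff_of_key_eq horder (hi.2.trans hj.2.symm)).mp hπ
  exact ((Equiv.Perm.map_finRange_perm π.symm).filter _).eq_of_pairwise
    (fun _ _ _ _ hab hba => absurd hab (lt_asymm hba)) hsorted ((List.pairwise_lt_finRange m).filter _)

end PerKeyOrder

/-- If a schedule `π` preserves per-key order, then it is valid: for every
value assignment, executing the writes in schedule order produces the same
final state as serial log order (the identity schedule). -/
theorem per_key_order_preserving_schedule_is_valid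
    {K V : Type*} [DecidableEq K] {m : ℕ} (k : Fin m → K)
    (π : Equiv.Perm (Fin m))
    (horder : ∀ i j : Fin m, k i = k j → i < j → π i < π j) :
    ∀ v : Fin m → V, execState k v π = execState k v 1 := by
  intro v
  funext q
  rw [execState_eq_foldl_map_symm, execState_one,
    List.foldl_update_apply_eq_foldl_filter, filter_key_map_symm_finRange_eq horder,
    ← List.foldl_update_apply_eq_foldl_filter]
end

section
/- Let e, d be real numbers with e > 0, d > 0, let n be a natural number with n ≥ 1 and n·d > e, and define F : ℕ → ℝ by F 0 = e + d and F (i+1) = max (F i) ((⌊(i+1)/n⌋ + 1)·e) + d, where ⌊(i+1)/n⌋ denotes natural-number division. Then for every i, F i = e + (i+1)·d. -/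
/-- With batches of `n` transactions arriving every `e` time units and a backup
serially executing each write in `d` time units, if `n·d > e` then the backup's
finish times `F`, defined by `F 0 = e + d` and
`F (i+1) = max (F i) ((⌊(i+1)/n⌋ + 1)·e) + d`, satisfy `F i = e + (i+1)·d`. -/
theorem backup_finish_times_back_to_back
    (e d : ℝ) (he : e > 0) (hd : d > 0) (n : ℕ) (hn : 1 ≤ n)
    (hnd : (n : ℝ) * d > e)
    (F : ℕ → ℝ)
    (hF0 : F 0 = e + d)
    (hFs : ∀ i : ℕ, F (i + 1) = max (F i) ((((i + 1) / n + 1 : ℕ) : ℝ) * e) + d) :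
    ∀ i : ℕ, F i = e + ((i : ℝ) + 1) * d := by
  intro i
  induction i with
  | zero => simpa using hF0
  | succ i ih =>
    have key : ((((i + 1) / n + 1 : ℕ) : ℝ) * e) ≤ F i := by
      rw [ih]
      have h1 : (((i + 1) / n : ℕ) : ℝ) * e ≤ (((i + 1) / n : ℕ) : ℝ) * ((n : ℝ) * d) :=
        mul_le_mul_of_nonneg_left (le_of_lt hnd) (Nat.cast_nonneg _)
      have h2 : ((i + 1) / n : ℕ) * n ≤ i + 1 := Nat.div_mul_le_self _ _
      have h3 : (((i + 1) / n : ℕ) : ℝ) * (n : ℝ) ≤ ((i : ℝ) + 1) := by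
        have := (Nat.cast_le (α := ℝ)).mpr h2
        push_cast at this
        linarith
      have h4 : (((i + 1) / n : ℕ) : ℝ) * ((n : ℝ) * d) ≤ ((i : ℝ) + 1) * d := by
        rw [← mul_assoc]
        exact mul_le_mul_of_nonneg_right h3 (le_of_lt hd)
      push_cast
      nlinarith
    rw [hFs i, max_eq_left key, ih]
    push_cast
    ring
end

section
/- Let e, d be real numbers with e > 0 and d > 0, let n be a natural number with n ≥ 1, and let i be a natural number. Then e + (i+1)·d − (⌊i/n⌋ + 1)·e > i·(n·d − e)/n, where ⌊i/n⌋ denotes natural-number division (so (⌊i/n⌋ + 1) = ⌊(i+n)/n⌋). -/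
/-- Lower bound on replication lag: for all `i`,
`e + (i+1)·d − (⌊i/n⌋ + 1)·e > i·(n·d − e)/n`. -/
theorem replication_lag_lower_bound
    (e d : ℝ) (he : 0 < e) (hd : 0 < d) (n : ℕ) (hn : 1 ≤ n) (i : ℕ) :
    e + ((i : ℝ) + 1) * d - ((i / n + 1 : ℕ) : ℝ) * e >
      (i : ℝ) * ((n : ℝ) * d - e) / (n : ℝ) := by
  have hn0 : (0:ℝ) < (n:ℝ) := by exact_mod_cast hn
  have h : ((i / n : ℕ) : ℝ) ≤ (i : ℝ) / (n : ℝ) := Nat.cast_div_le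
  push_cast
  have hq : ((i / n : ℕ) : ℝ) * n ≤ (i:ℝ) := (le_div_iff₀ hn0).mp h
  rw [gt_iff_lt, div_lt_iff₀ hn0]
  nlinarith [mul_pos hn0 hd]
end

section
/- Let e, d, L be real numbers with e > 0, d > 0, L ≥ 0, let n be a natural number with n ≥ 1 and n·d > e, and let i be a natural number with (i : ℝ) ≥ n·L/(n·d − e). Then e + (i+1)·d − (⌊i/n⌋ + 1)·e > L, where ⌊i/n⌋ denotes natural-number division. -/
/-!
Since `⌊i/n⌋ ≤ i/n`, the lag `(i+1)·d − ⌊i/n⌋·e` is at least `d + i·(n·d − e)/n`: the backup falls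
behind by `d − e/n > 0` per transaction. The choice of `i` makes `i·(n·d − e)/n ≥ L`, and the extra
`d > 0` makes the inequality strict.
-/

/-- `f_b(T_i) − f_p(T_i)`. -/
def replicationLag (e d : ℝ) (n i : ℕ) : ℝ :=
  e + ((i : ℝ) + 1) * d - ((i / n + 1 : ℕ) : ℝ) * e

theorem le_replicationLag {e : ℝ} (d : ℝ) (he : 0 ≤ e) {n : ℕ} (hn : 0 < n) (i : ℕ) :
    (i : ℝ) * ((n : ℝ) * d - e) / n + d ≤ replicationLag e d n i := by
  have hfloor : ((i / n : ℕ) : ℝ) * e ≤ (i : ℝ) / n * e :=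
    mul_le_mul_of_nonneg_right Nat.cast_div_le he
  have hsplit : (i : ℝ) * ((n : ℝ) * d - e) / n = i * d - i / n * e := by
    field_simp
  rw [replicationLag, hsplit]
  push_cast
  linarith

theorem replication_lag_exceeds_bound_general
    (e d L : ℝ) (he : 0 < e) (hd : 0 < d)
    (n : ℕ) (hn : 1 ≤ n) (hnd : (n : ℝ) * d > e)
    (i : ℕ) (hi : (i : ℝ) ≥ (n : ℝ) * L / ((n : ℝ) * d - e)) :
    e + ((i : ℝ) + 1) * d - ((i / n + 1 : ℕ) : ℝ) * e > L := by
  have hn₀ : (0 : ℝ) < n := by exact_mod_cast hn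
  have hL : L ≤ (i : ℝ) * ((n : ℝ) * d - e) / n := by
    rw [le_div_iff₀ hn₀, mul_comm]
    exact (div_le_iff₀ (sub_pos.mpr hnd)).mp hi
  calc L < (i : ℝ) * ((n : ℝ) * d - e) / n + d := by linarith
    _ ≤ replicationLag e d n i := le_replicationLag d he.le hn i

/-- For any claimed lag bound `L ≥ 0`, taking `i ≥ n·L/(n·d − e)` makes the
replication lag `e + (i+1)·d − (⌊i/n⌋ + 1)·e` exceed `L`. -/
theorem replication_lag_exceeds_bound
    (e d L : ℝ) (he : 0 < e) (hd : 0 < d) (hL : 0 ≤ L)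
    (n : ℕ) (hn : 1 ≤ n) (hnd : (n : ℝ) * d > e)
    (i : ℕ) (hi : (i : ℝ) ≥ (n : ℝ) * L / ((n : ℝ) * d - e)) :
    e + ((i : ℝ) + 1) * d - ((i / n + 1 : ℕ) : ℝ) * e > L :=
  replication_lag_exceeds_bound_general e d L he hd n hn hnd i hi
end

section
/- Let e, d be real numbers with e > 0 and d > 0, and let n be a natural number with n ≥ 1 and n·d > e. Then for every real number L there exists a natural number i such that e + (i+1)·d − (⌊i/n⌋ + 1)·e > L, where ⌊i/n⌋ denotes natural-number division. -/
/-- No finite bound `L` bounds the replication lag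
`e + (i+1)·d − (⌊i/n⌋ + 1)·e` for all transactions `i`. -/
theorem no_bounded_replication_lag
    (e d : ℝ) (he : 0 < e) (hd : 0 < d)
    (n : ℕ) (hn : 1 ≤ n) (hnd : (n : ℝ) * d > e) :
    ∀ L : ℝ, ∃ i : ℕ,
      e + ((i : ℝ) + 1) * d - ((i / n + 1 : ℕ) : ℝ) * e > L := by
  intro L
  obtain ⟨k, hk⟩ := exists_nat_gt ((L - d) / ((n : ℝ) * d - e))
  refine ⟨n * k, ?_⟩
  have hpos : (0:ℝ) < (n : ℝ) * d - e := by linarith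
  have hk' : L - d < (k : ℝ) * ((n : ℝ) * d - e) := by
    have := (div_lt_iff₀ hpos).mp hk
    linarith
  have hdiv : n * k / n = k := Nat.mul_div_cancel_left k (by omega)
  rw [hdiv]
  push_cast
  nlinarith
end

section
/- Let e, d be real numbers with e > 0 and d > 0, and let n be a natural number with n ≥ 1 and n·d > e. Then the sequence i ↦ e + (i+1)·d − (⌊i/n⌋ + 1)·e (with ⌊i/n⌋ natural-number division) tends to infinity as i → ∞ (Filter.Tendsto along atTop to atTop). -/
/-- The replication lag `e + (i+1)·d − (⌊i/n⌋ + 1)·e` tends to infinity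
as `i → ∞`. -/
theorem replication_lag_tendsto_atTop
    (e d : ℝ) (he : 0 < e) (hd : 0 < d)
    (n : ℕ) (hn : 1 ≤ n) (hnd : (n : ℝ) * d > e) :
    Filter.Tendsto
      (fun i : ℕ => e + ((i : ℝ) + 1) * d - ((i / n + 1 : ℕ) : ℝ) * e)
      Filter.atTop Filter.atTop := by
  have hn0 : (0 : ℝ) < n := by exact_mod_cast hn
  have hc : 0 < d - e / n := by
    rw [sub_pos, div_lt_iff₀ hn0]
    linarith [hnd]
  have hg : Filter.Tendsto (fun i : ℕ => (i : ℝ) * (d - e / n) + d)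
      Filter.atTop Filter.atTop := by
    apply Filter.tendsto_atTop_add_const_right
    exact (tendsto_natCast_atTop_atTop).atTop_mul_const hc
  refine Filter.tendsto_atTop_mono (fun i => ?_) hg
  have hdivle : ((i / n : ℕ) : ℝ) ≤ (i : ℝ) / n := Nat.cast_div_le
  push_cast
  have : ((i / n : ℕ) : ℝ) * e ≤ (i : ℝ) / n * e :=
    mul_le_mul_of_nonneg_right hdivle he.le
  have expand : (i : ℝ) / n * e = (i : ℝ) * (e / n) := by ring
  nlinarith [this]
end

section
/- Let e, d be real numbers with e > 0, d > 0, let n be a natural number with n ≥ 1 and n·d > e, and define the backup finish times F : ℕ → ℝ by F 0 = e + d and F (i+1) = max (F i) ((⌊(i+1)/n⌋ + 1)·e) + d, and the primary finish times P : ℕ → ℝ by P i = (⌊i/n⌋ + 1)·e, where ⌊·/n⌋ denotes natural-number division. Then for every real number L there exists a natural number i such that F i − P i > L. -/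
/-! Along the multiples `i = k·n` the primary finishes at `(k + 1)·e`, whereas the serial backup
needs at least `d` per write, so it finishes no earlier than `e + (k·n + 1)·d`. The lag at `k·n`
is therefore at least `d + k·(n·d − e)`, which grows without bound because `n·d > e`. -/

theorem add_nsmul_le_of_add_le_succ {α : Type*} [AddCommMonoid α] [PartialOrder α]
    [IsOrderedAddMonoid α] {F : ℕ → α} {d : α} (h : ∀ i, F i + d ≤ F (i + 1)) (i : ℕ) :
    F 0 + i • d ≤ F i := by
  induction i with
  | zero => simp
  | succ i ih =>
    calc F 0 + (i + 1) • d = F 0 + i • d + d := by rw [succ_nsmul, add_assoc]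
      _ ≤ F i + d := by gcongr
      _ ≤ F (i + 1) := h i

theorem exists_nat_lt_add_mul {a c : ℝ} (hc : 0 < c) (L : ℝ) : ∃ k : ℕ, L < a + k * c := by
  obtain ⟨k, hk⟩ := exists_nat_gt ((L - a) / c)
  exact ⟨k, by rw [div_lt_iff₀ hc] at hk; linarith⟩

theorem full_unbounded_replication_lag_general
    (e d : ℝ)
    (n : ℕ) (hn : 1 ≤ n) (hnd : (n : ℝ) * d > e)
    (F : ℕ → ℝ)
    (hF0 : F 0 = e + d)
    (hFs : ∀ i : ℕ, F (i + 1) = max (F i) ((((i + 1) / n + 1 : ℕ) : ℝ) * e) + d)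
    (P : ℕ → ℝ)
    (hP : ∀ i : ℕ, P i = ((i / n + 1 : ℕ) : ℝ) * e) :
    ∀ L : ℝ, ∃ i : ℕ, F i - P i > L := by
  intro L
  have hF_step : ∀ i, F i + d ≤ F (i + 1) := fun i => by
    rw [hFs i]
    gcongr
    exact le_max_left _ _
  obtain ⟨k, hk⟩ := exists_nat_lt_add_mul (a := d) (sub_pos.mpr hnd) L
  refine ⟨k * n, ?_⟩
  have hF_lower := add_nsmul_le_of_add_le_succ hF_step (k * n)
  have hP_mul : P (k * n) = (k + 1) * e := by
    rw [hP, Nat.mul_div_cancel k (by omega)]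
    push_cast
    ring
  rw [nsmul_eq_mul, hF0] at hF_lower
  push_cast at hF_lower
  rw [hP_mul]
  linarith

/-- With primary finish times `P i = (⌊i/n⌋ + 1)·e` and backup finish times `F`
given by `F 0 = e + d` and `F (i+1) = max (F i) ((⌊(i+1)/n⌋ + 1)·e) + d`,
if `n·d > e` then no bound `L` bounds the replication lag `F i − P i`. -/
theorem full_unbounded_replication_lag
    (e d : ℝ) (he : 0 < e) (hd : 0 < d)
    (n : ℕ) (hn : 1 ≤ n) (hnd : (n : ℝ) * d > e)
    (F : ℕ → ℝ)
    (hF0 : F 0 = e + d)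
    (hFs : ∀ i : ℕ, F (i + 1) = max (F i) ((((i + 1) / n + 1 : ℕ) : ℝ) * e) + d)
    (P : ℕ → ℝ)
    (hP : ∀ i : ℕ, P i = ((i / n + 1 : ℕ) : ℝ) * e) :
    ∀ L : ℝ, ∃ i : ℕ, F i - P i > L :=
  full_unbounded_replication_lag_general e d n hn hnd F hF0 hFs P hP
end
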